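/- Protocol PIF is snap-stabilizing for the PIF-Execution specification: every execution, starting from any arbitrary initial configuration, satisfies the Start, Correctness, Termination, and Decision properties of the PIF-Execution specification. -/
import Mathlib


/-!
A formal model of Protocol PIF (Algorithm 1) in a fully-connected
message-passing system with unreliable, fair, single-message-capacity
channels.  Processes are `Fin n`; broadcast/feedback data range over `D`.

Every configuration is a possible initial configuration; an execution is an
infinite sequence of atomic steps, each step being an external request
(`env`), an external setting of a feedback message (`setF`), one of the
actions `A1`, `A2`, `A3` of Protocol PIF, or the loss of a message in
transit.  Fairness of channels and weak fairness of enabled protocol actions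
are part of the notion of execution.
-/

set_option autoImplicit false

namespace PIF

inductive Req where
  | Wait | In | Done
deriving DecidableEq

/-- A `⟨PIF, B, F, qState, pState⟩` message: the broadcast data, the feedback
data, the sender's `State[receiver]`, and the sender's `NeigState[receiver]`. -/
structure Msg (D : Type*) where
  b : D
  f : D
  sSt : Fin 5
  sNg : Fin 5

/-- A configuration: the variables of each process together with the contents
of every channel (single-message capacity, hence `Option`).
`chan p q` is the channel from `p` to `q`. -/
structure Cfg (n : ℕ) (D : Type*) where
  req : Fin n → Req
  bmes : Fin n → D
  fmes : Fin n → Fin n → D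
  st : Fin n → Fin n → Fin 5
  ng : Fin n → Fin n → Fin 5
  chan : Fin n → Fin n → Option (Msg D)

inductive Act (n : ℕ) (D : Type*) where
  /-- external request to broadcast `b`: `Request p := Wait`, `B-Mes p := b` -/
  | env (p : Fin n) (b : D)
  /-- the application externally sets the feedback message `F-Mes p [q] := f` -/
  | setF (p q : Fin n) (f : D)
  /-- action `A1` of process `p` (the starting action) -/
  | a1 (p : Fin n)
  /-- action `A2` of process `p` (decision or (re)sending) -/
  | a2 (p : Fin n)
  /-- action `A3`: process `p` receives message `m` from process `q` -/
  | a3 (p q : Fin n) (m : Msg D)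
  /-- the message in transit from `p` to `q` is lost -/
  | lose (p q : Fin n)

variable {n : ℕ} {D : Type*}

def upd2 {β : Type*} (f : Fin n → Fin n → β) (p q : Fin n) (v : β) :
    Fin n → Fin n → β :=
  fun a b => if a = p ∧ b = q then v else f a b

/-- Sending into a single-capacity unreliable channel: if the channel is full
the message is lost; if it is empty, the message is put in the channel or
lost. -/
def send (old : Option (Msg D)) (m : Msg D) (new : Option (Msg D)) : Prop :=
  (old ≠ none ∧ new = old) ∨ (old = none ∧ (new = some m ∨ new = none))

/-- The semantics of one atomic step `γ —A→ γ'`. -/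
def StepAt (γ : Cfg n D) : Act n D → Cfg n D → Prop
  | .env p b, γ' =>
      γ' = { γ with req := Function.update γ.req p .Wait,
                    bmes := Function.update γ.bmes p b }
  | .setF p q f, γ' =>
      γ' = { γ with fmes := upd2 γ.fmes p q f }
  | .a1 p, γ' =>
      γ.req p = .Wait ∧
      γ' = { γ with req := Function.update γ.req p .In,
                    st := Function.update γ.st p (fun _ => 0) }
  | .a2 p, γ' =>
      γ.req p = .In ∧
      (((∀ q, q ≠ p → γ.st p q = 4) ∧
          γ' = { γ with req := Function.update γ.req p .Done }) ∨
       ((¬ ∀ q, q ≠ p → γ.st p q = 4) ∧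
          γ'.req = γ.req ∧ γ'.bmes = γ.bmes ∧ γ'.fmes = γ.fmes ∧
          γ'.st = γ.st ∧ γ'.ng = γ.ng ∧
          (∀ q, q ≠ p → γ.st p q ≠ 4 →
            send (γ.chan p q) ⟨γ.bmes p, γ.fmes p q, γ.st p q, γ.ng p q⟩
              (γ'.chan p q)) ∧
          (∀ a b, ¬ (a = p ∧ b ≠ p ∧ γ.st p b ≠ 4) → γ'.chan a b = γ.chan a b)))
  | .a3 p q m, γ' =>
      q ≠ p ∧ γ.chan q p = some m ∧
      (let st' : Fin 5 :=
        if γ.st p q = m.sNg ∧ (γ.st p q : ℕ) < 4 then γ.st p q + 1 else γ.st p q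
       γ'.req = γ.req ∧ γ'.bmes = γ.bmes ∧ γ'.fmes = γ.fmes ∧
       γ'.st = upd2 γ.st p q st' ∧
       γ'.ng = upd2 γ.ng p q m.sSt ∧
       γ'.chan q p = none ∧
       (((m.sSt : ℕ) < 4 ∧
           send (γ.chan p q) ⟨γ.bmes p, γ.fmes p q, st', m.sSt⟩ (γ'.chan p q)) ∨
        (¬ (m.sSt : ℕ) < 4 ∧ γ'.chan p q = γ.chan p q)) ∧
       (∀ a b, ¬ (a = q ∧ b = p) → ¬ (a = p ∧ b = q) →
          γ'.chan a b = γ.chan a b))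
  | .lose p q, γ' =>
      (∃ m, γ.chan p q = some m) ∧
      γ'.req = γ.req ∧ γ'.bmes = γ.bmes ∧ γ'.fmes = γ.fmes ∧
      γ'.st = γ.st ∧ γ'.ng = γ.ng ∧
      γ'.chan p q = none ∧
      (∀ a b, ¬ (a = p ∧ b = q) → γ'.chan a b = γ.chan a b)

/-- A `receive-brd⟨B⟩ from q` event is generated at `p` in step `γ —A→ ·`. -/
def brdEvent (γ : Cfg n D) (A : Act n D) (p q : Fin n) (B : D) : Prop :=
  ∃ m : Msg D, A = .a3 p q m ∧ m.b = B ∧ γ.ng p q ≠ 3 ∧ m.sSt = 3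

/-- A `receive-fck⟨F⟩ from q` event is generated at `p` in step `γ —A→ ·`
(i.e. `State p [q]` switches from 3 to 4). -/
def fckEvent (γ : Cfg n D) (A : Act n D) (p q : Fin n) (F : D) : Prop :=
  ∃ m : Msg D, A = .a3 p q m ∧ m.f = F ∧ γ.st p q = 3 ∧ m.sNg = 3

def Enabled (γ : Cfg n D) (A : Act n D) : Prop := ∃ γ', StepAt γ A γ'

/-- The actions of the protocol proper (weak fairness applies to these). -/
def ProcAct : Act n D → Prop
  | .a1 _ => True
  | .a2 _ => True
  | .a3 _ _ _ => True
  | _ => False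

/-- Step `i` attempts to send a message from `p` to `q`. -/
def SendAttempt (γ : ℕ → Cfg n D) (act : ℕ → Act n D) (i : ℕ)
    (p q : Fin n) : Prop :=
  (act i = .a2 p ∧ (γ i).req p = .In ∧ q ≠ p ∧ (γ i).st p q ≠ 4 ∧
     ¬ ∀ r, r ≠ p → (γ i).st p r = 4) ∨
  (∃ m : Msg D, act i = .a3 p q m ∧ (m.sSt : ℕ) < 4)

/-- An execution: an infinite sequence of valid atomic steps starting from an
arbitrary configuration, in which (weak fairness) every protocol action that
is continuously enabled is eventually executed, and (channel fairness) if
infinitely many messages are sent from `p` to `q` then `q` receives a message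
from `p` infinitely often. -/
structure Exec (n : ℕ) (D : Type*) where
  γ : ℕ → Cfg n D
  act : ℕ → Act n D
  valid : ∀ i, StepAt (γ i) (act i) (γ (i + 1))
  wf : ∀ A : Act n D, ProcAct A →
        (∃ i, ∀ j, i ≤ j → Enabled (γ j) A) → ∀ i, ∃ j, i ≤ j ∧ act j = A
  chanFair : ∀ p q : Fin n, p ≠ q →
        (∀ i, ∃ j, i ≤ j ∧ SendAttempt γ act j p q) →
        ∀ i, ∃ j, i ≤ j ∧ ∃ m : Msg D, act j = .a3 q p m

/-- Hypothesis 1: while `Request p ≠ Done`, `Request p` is not externally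
set to `Wait`. -/
def Hyp1 (e : Exec n D) : Prop :=
  ∀ i p b, e.act i = .env p b → (e.γ i).req p = .Done

end PIF

namespace PIF


section Aux

variable {n : ℕ} {D : Type*}

/-! ### Generic arithmetic helpers -/

lemma fin5_val_succ (a : Fin 5) (h : (a : ℕ) < 4) : ((a + 1 : Fin 5) : ℕ) = (a : ℕ) + 1 := by
  simp [Fin.add_def]; omega

lemma stab (f : ℕ → ℕ) (B : ℕ) (mono : ∀ j k, j ≤ k → f j ≤ f k)
    (bdd : ∀ j, f j ≤ B) : ∃ i, ∀ j, i ≤ j → f j = f i := by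
  by_contra h
  push_neg at h
  have grow : ∀ m, ∃ i, m ≤ f i := by
    intro m
    induction m with
    | zero => exact ⟨0, Nat.zero_le _⟩
    | succ m ih =>
        obtain ⟨i, hi⟩ := ih
        obtain ⟨j, hij, hne⟩ := h i
        have := mono i j hij
        exact ⟨j, by omega⟩
  obtain ⟨i, hi⟩ := grow (B + 1)
  have := bdd i
  omega

lemma mono_of_step (f : ℕ → ℕ) (lo : ℕ) (h : ∀ x, lo ≤ x → f x ≤ f (x + 1)) :
    ∀ j k, lo ≤ j → j ≤ k → f j ≤ f k := by
  intro j k hj hjk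
  induction k, hjk using Nat.le_induction with
  | base => exact le_rfl
  | succ k hk ih => exact le_trans ih (h k (le_trans hj hk))

lemma mono_of_step_window (f : ℕ → ℕ) (lo hi : ℕ)
    (h : ∀ x, lo ≤ x → x < hi → f x ≤ f (x + 1)) :
    ∀ j k, lo ≤ j → j ≤ k → k ≤ hi → f j ≤ f k := by
  intro j k hj hjk hk
  induction k, hjk using Nat.le_induction with
  | base => exact le_rfl
  | succ k hk' ih =>
      exact le_trans (ih (by omega)) (h k (le_trans hj hk') (by omega))

lemma cross (f : ℕ → ℕ) (v : ℕ) :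
    ∀ lo hi, lo ≤ hi → f lo ≤ v → v < f hi →
      ∃ k, lo ≤ k ∧ k < hi ∧ f k ≤ v ∧ v < f (k + 1) := by
  intro lo hi hle
  induction hi, hle using Nat.le_induction with
  | base => intro h1 h2; omega
  | succ hi hle ih =>
      intro h1 h2
      by_cases hc : f hi ≤ v
      · exact ⟨hi, hle, by omega, hc, h2⟩
      · obtain ⟨k, h3, h4, h5, h6⟩ := ih h1 (by omega)
        exact ⟨k, h3, by omega, h5, h6⟩

lemma flip {α : Type*} (g : ℕ → α) (v : α) :
    ∀ b c, b ≤ c → g b ≠ v → g c = v →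
      ∃ w, b ≤ w ∧ w < c ∧ g w ≠ v ∧ g (w + 1) = v := by
  intro b c hbc
  induction c, hbc using Nat.le_induction with
  | base => intro h1 h2; exact absurd h2 h1
  | succ c hbc ih =>
      intro h1 h2
      by_cases hc : g c = v
      · obtain ⟨w, h3, h4, h5, h6⟩ := ih h1 hc
        exact ⟨w, h3, by omega, h5, h6⟩
      · exact ⟨c, hbc, by omega, hc, h2⟩

end Aux

section Frame

variable {n : ℕ} {D : Type*} (e : Exec n D)

/-- How `st p q` can change in one step. -/
lemma st_succ (i : ℕ) (p q : Fin n) :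
    (e.γ (i+1)).st p q = (e.γ i).st p q ∨
    (e.act i = .a1 p ∧ (e.γ i).req p = .Wait ∧ (e.γ (i+1)).st p q = 0) ∨
    (∃ m : Msg D, e.act i = .a3 p q m ∧ (e.γ i).chan q p = some m ∧
      (e.γ i).st p q = m.sNg ∧ ((e.γ i).st p q : ℕ) < 4 ∧
      (e.γ (i+1)).st p q = (e.γ i).st p q + 1) := by
  have hv := e.valid i
  cases hA : e.act i with
  | env p' b => rw [hA] at hv; simp only [StepAt] at hv; rw [hv]; left; rfl
  | setF p' q' f => rw [hA] at hv; simp only [StepAt] at hv; rw [hv]; left; rfl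
  | a1 p' =>
      rw [hA] at hv; simp only [StepAt] at hv
      obtain ⟨hw, hv⟩ := hv
      rw [hv]
      by_cases hp : p = p'
      · subst hp; right; left; exact ⟨rfl, hw, by simp [Function.update]⟩
      · left; simp [Function.update, hp]
  | a2 p' =>
      rw [hA] at hv; simp only [StepAt] at hv
      obtain ⟨hin, hv | hv⟩ := hv
      · rw [hv.2]; left; rfl
      · left; rw [hv.2.2.2.2.1]
  | a3 p' q' m =>
      rw [hA] at hv; simp only [StepAt] at hv
      obtain ⟨hne, hch, _, _, _, hst, _⟩ := hv
      rw [hst]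
      by_cases hp : p = p' ∧ q = q'
      · obtain ⟨hp1, hp2⟩ := hp; subst hp1; subst hp2
        by_cases hc : (e.γ i).st p q = m.sNg ∧ ((e.γ i).st p q : ℕ) < 4
        · right; right
          exact ⟨m, rfl, hch, hc.1, hc.2, by simp [upd2, if_pos hc]⟩
        · left; simp [upd2, if_neg hc]
      · left; simp [upd2, hp]
  | lose p' q' =>
      rw [hA] at hv
      left; rw [hv.2.2.2.2.1]

/-- How `ng p q` can change in one step. -/
lemma ng_succ (i : ℕ) (p q : Fin n) :
    (e.γ (i+1)).ng p q = (e.γ i).ng p q ∨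
    (∃ m : Msg D, e.act i = .a3 p q m ∧ (e.γ i).chan q p = some m ∧
      (e.γ (i+1)).ng p q = m.sSt) := by
  have hv := e.valid i
  cases hA : e.act i with
  | env p' b => rw [hA] at hv; simp only [StepAt] at hv; rw [hv]; left; rfl
  | setF p' q' f => rw [hA] at hv; simp only [StepAt] at hv; rw [hv]; left; rfl
  | a1 p' => rw [hA] at hv; simp only [StepAt] at hv; rw [hv.2]; left; rfl
  | a2 p' =>
      rw [hA] at hv; simp only [StepAt] at hv
      obtain ⟨hin, hv | hv⟩ := hv
      · rw [hv.2]; left; rfl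
      · left; rw [hv.2.2.2.2.2.1]
  | a3 p' q' m =>
      rw [hA] at hv; simp only [StepAt] at hv
      obtain ⟨hne, hch, _, _, _, _, hng, _⟩ := hv
      rw [hng]
      by_cases hp : p = p' ∧ q = q'
      · obtain ⟨hp1, hp2⟩ := hp; subst hp1; subst hp2
        right; exact ⟨m, rfl, hch, by simp [upd2]⟩
      · left; simp [upd2, hp]
  | lose p' q' =>
      rw [hA] at hv
      left; rw [hv.2.2.2.2.2.1]

/-- How `req p` can change in one step. -/
lemma req_succ (i : ℕ) (p : Fin n) :
    (e.γ (i+1)).req p = (e.γ i).req p ∨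
    (e.act i = .a1 p ∧ (e.γ i).req p = .Wait ∧ (e.γ (i+1)).req p = .In) ∨
    (e.act i = .a2 p ∧ (e.γ i).req p = .In ∧ (e.γ (i+1)).req p = .Done ∧
      ∀ q, q ≠ p → (e.γ i).st p q = 4) ∨
    (∃ b, e.act i = .env p b ∧ (e.γ (i+1)).req p = .Wait) := by
  have hv := e.valid i
  cases hA : e.act i with
  | env p' b =>
      rw [hA] at hv; simp only [StepAt] at hv; rw [hv]
      by_cases hp : p = p'
      · subst hp; right; right; right; exact ⟨b, rfl, by simp [Function.update]⟩
      · left; simp [Function.update, hp]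
  | setF p' q' f => rw [hA] at hv; simp only [StepAt] at hv; rw [hv]; left; rfl
  | a1 p' =>
      rw [hA] at hv; simp only [StepAt] at hv
      obtain ⟨hw, hv⟩ := hv
      rw [hv]
      by_cases hp : p = p'
      · subst hp; right; left; exact ⟨rfl, hw, by simp [Function.update]⟩
      · left; simp [Function.update, hp]
  | a2 p' =>
      rw [hA] at hv; simp only [StepAt] at hv
      obtain ⟨hin, hv | hv⟩ := hv
      · obtain ⟨hall, hv⟩ := hv
        rw [hv]
        by_cases hp : p = p'
        · subst hp; right; right; left
          exact ⟨rfl, hin, by simp [Function.update], hall⟩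
        · left; simp [Function.update, hp]
      · left; rw [hv.2.1]
  | a3 p' q' m =>
      rw [hA] at hv; simp only [StepAt] at hv
      left; rw [hv.2.2.1]
  | lose p' q' =>
      rw [hA] at hv
      left; rw [hv.2.1]

/-- `bmes p` changes only by an `env` action at `p`. -/
lemma bmes_succ (i : ℕ) (p : Fin n) :
    (e.γ (i+1)).bmes p = (e.γ i).bmes p ∨ ∃ b, e.act i = .env p b := by
  have hv := e.valid i
  cases hA : e.act i with
  | env p' b =>
      rw [hA] at hv; simp only [StepAt] at hv; rw [hv]
      by_cases hp : p = p'
      · subst hp; right; exact ⟨b, rfl⟩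
      · left; simp [Function.update, hp]
  | setF p' q' f => rw [hA] at hv; simp only [StepAt] at hv; rw [hv]; left; rfl
  | a1 p' => rw [hA] at hv; simp only [StepAt] at hv; rw [hv.2]; left; rfl
  | a2 p' =>
      rw [hA] at hv; simp only [StepAt] at hv
      obtain ⟨hin, hv | hv⟩ := hv
      · rw [hv.2]; left; rfl
      · left; rw [hv.2.2.1]
  | a3 p' q' m =>
      rw [hA] at hv; simp only [StepAt] at hv
      left; rw [hv.2.2.2.1]
  | lose p' q' =>
      rw [hA] at hv
      left; rw [hv.2.2.1]

/-- How a channel can change in one step: either unchanged, or emptied, or a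
message with the sender's current variables is put in it. -/
lemma chan_succ (i : ℕ) (a b : Fin n) :
    (e.γ (i+1)).chan a b = (e.γ i).chan a b ∨
    (e.γ (i+1)).chan a b = none ∨
    (∃ m : Msg D, (e.γ i).chan a b = none ∧ (e.γ (i+1)).chan a b = some m ∧
      m.b = (e.γ (i+1)).bmes a ∧ m.sSt = (e.γ (i+1)).st a b ∧
      m.sNg = (e.γ (i+1)).ng a b) := by
  have hv := e.valid i
  cases hA : e.act i with
  | env p' b' => rw [hA] at hv; simp only [StepAt] at hv; rw [hv]; left; rfl
  | setF p' q' f => rw [hA] at hv; simp only [StepAt] at hv; rw [hv]; left; rfl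
  | a1 p' => rw [hA] at hv; simp only [StepAt] at hv; rw [hv.2]; left; rfl
  | a2 p' =>
      rw [hA] at hv; simp only [StepAt] at hv
      obtain ⟨hin, hv | hv⟩ := hv
      · rw [hv.2]; left; rfl
      · obtain ⟨hnall, hreq, hbm, hfm, hst, hng, hsend, hfr⟩ := hv
        by_cases hc : a = p' ∧ b ≠ p' ∧ (e.γ i).st p' b ≠ 4
        · obtain ⟨ha, hb, h4⟩ := hc
          subst ha
          rcases hsend b hb h4 with ⟨hO, hN⟩ | ⟨hO, hN | hN⟩
          · left; exact hN
          · right; right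
            refine ⟨_, hO, hN, ?_, ?_, ?_⟩ <;> simp [hbm, hst, hng]
          · right; left; exact hN
        · left; exact hfr a b hc
  | a3 p' q' m =>
      rw [hA] at hv; simp only [StepAt] at hv
      obtain ⟨hne, hch, hreq, hbm, hfm, hst, hng, hcons, hrep, hfr⟩ := hv
      by_cases hc1 : a = q' ∧ b = p'
      · obtain ⟨ha, hb⟩ := hc1; subst ha; subst hb
        right; left; exact hcons
      · by_cases hc2 : a = p' ∧ b = q'
        · obtain ⟨ha, hb⟩ := hc2; subst ha; subst hb
          rcases hrep with ⟨hlt, hsend⟩ | ⟨hge, heq⟩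
          · rcases hsend with ⟨hO, hN⟩ | ⟨hO, hN | hN⟩
            · left; exact hN
            · right; right
              refine ⟨_, hO, hN, ?_, ?_, ?_⟩
              · simp [hbm]
              · simp [hst, upd2]
              · simp [hng, upd2]
            · right; left; exact hN
          · left; exact heq
        · left; exact hfr a b hc1 hc2
  | lose p' q' =>
      rw [hA] at hv
      obtain ⟨hex, hreq, hbm, hfm, hst, hng, hnone, hfr⟩ := hv
      by_cases hc : a = p' ∧ b = q'
      · obtain ⟨ha, hb⟩ := hc; subst ha; subst hb; right; left; exact hnone
      · left; exact hfr a b hc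

end Frame


section Origin

variable {n : ℕ} {D : Type*} (e : Exec n D)

/-- If a message `m` sits in channel `a → b` at time `j` but not at time
`j0 ≤ j`, then it was put in the channel at some step `u ∈ [j0, j)`, and its
fields record the sender's variables at that moment. -/
lemma origin (a b : Fin n) (m : Msg D) :
    ∀ j0 j, j0 ≤ j → (e.γ j).chan a b = some m →
      (e.γ j0).chan a b ≠ some m →
      ∃ u, j0 ≤ u ∧ u < j ∧ m.b = (e.γ (u+1)).bmes a ∧
        m.sSt = (e.γ (u+1)).st a b ∧ m.sNg = (e.γ (u+1)).ng a b := by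
  intro j0 j hle
  induction j, hle using Nat.le_induction with
  | base => intro h1 h2; exact absurd h1 h2
  | succ j hle ih =>
      intro h1 h2
      rcases chan_succ e j a b with hc | hc | ⟨m', hO, hN, hb, hs, hg⟩
      · obtain ⟨u, hu1, hu2, hu3⟩ := ih (hc ▸ h1) h2
        exact ⟨u, hu1, by omega, hu3⟩
      · rw [h1] at hc; exact absurd hc (by simp)
      · rw [h1] at hN
        obtain rfl : m' = m := by injection hN.symm
        exact ⟨j, hle, by omega, hb, hs, hg⟩

end Origin

section Liveness

variable {n : ℕ} {D : Type*} (e : Exec n D) (h1 : Hyp1 e)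

lemma enabled_a1 {i : ℕ} {p : Fin n} (hw : (e.γ i).req p = .Wait) :
    Enabled (e.γ i) (Act.a1 p (D := D)) :=
  ⟨_, hw, rfl⟩

lemma enabled_a2 {i : ℕ} {p : Fin n} (hin : (e.γ i).req p = .In) :
    Enabled (e.γ i) (Act.a2 p (D := D)) := by
  by_cases hall : ∀ q, q ≠ p → (e.γ i).st p q = 4
  · exact ⟨_, hin, Or.inl ⟨hall, rfl⟩⟩
  · refine ⟨e.γ i, hin, Or.inr ⟨hall, rfl, rfl, rfl, rfl, rfl, ?_, fun _ _ _ => rfl⟩⟩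
    intro q hq h4
    by_cases hc : (e.γ i).chan p q = none
    · exact Or.inr ⟨hc, Or.inr hc⟩
    · exact Or.inl ⟨hc, rfl⟩

include h1 in
/-- **Start**: a requested process executes `A1` in finite time. -/
lemma start_lemma (p : Fin n) (i : ℕ) (hw : (e.γ i).req p = .Wait) :
    ∃ j, i ≤ j ∧ e.act j = .a1 p := by
  by_contra h
  push_neg at h
  have hwait : ∀ j, i ≤ j → (e.γ j).req p = .Wait := by
    intro j hj
    induction j, hj using Nat.le_induction with
    | base => exact hw
    | succ j hj ih =>
        rcases req_succ e j p with hc | ⟨ha, _⟩ | ⟨_, hr, _⟩ | ⟨b, hb, _⟩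
        · rw [hc, ih]
        · exact absurd ha (h j hj)
        · rw [ih] at hr; exact absurd hr (by simp)
        · have := h1 j p b hb; rw [ih] at this; exact absurd this (by simp)
  obtain ⟨j, hj, hact⟩ := e.wf (.a1 p) trivial
    ⟨i, fun j hj => enabled_a1 e (hwait j hj)⟩ i
  exact h j hj hact

include h1 in
lemma req_in_persist {p : Fin n} {i : ℕ} (hin : (e.γ i).req p = .In)
    (hnd : ∀ j, i ≤ j → (e.γ j).req p ≠ .Done) :
    ∀ j, i ≤ j → (e.γ j).req p = .In := by
  intro j hj
  induction j, hj using Nat.le_induction with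
  | base => exact hin
  | succ j hj ih =>
      rcases req_succ e j p with hc | ⟨_, hr, _⟩ | ⟨_, _, hd, _⟩ | ⟨b, hb, _⟩
      · rw [hc, ih]
      · rw [ih] at hr; exact absurd hr (by simp)
      · exact absurd hd (hnd (j+1) (by omega))
      · have := h1 j p b hb; rw [ih] at this; exact absurd this (by simp)


include h1 in
/-- **Termination**: every PIF-computation terminates in finite time. -/
lemma termination (p : Fin n) (i : ℕ) : ∃ j, i ≤ j ∧ (e.γ j).req p = .Done := by
  by_contra h
  push_neg at h
  -- the request eventually reads `In`
  have hreach : ∃ i1, i ≤ i1 ∧ (e.γ i1).req p = .In := by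
    cases hr : (e.γ i).req p with
    | Wait =>
        obtain ⟨j, hj, hact⟩ := start_lemma e h1 p i hr
        have hv := e.valid j
        rw [hact] at hv; simp only [StepAt] at hv
        exact ⟨j+1, by omega, by rw [hv.2]; simp [Function.update]⟩
    | In => exact ⟨i, le_rfl, hr⟩
    | Done => exact absurd hr (h i le_rfl)
  obtain ⟨i1, hi1, hin1⟩ := hreach
  have hin : ∀ j, i1 ≤ j → (e.γ j).req p = .In :=
    req_in_persist e h1 hin1 (fun j hj => h j (by omega))
  have wfa2 : ∀ k, ∃ j, k ≤ j ∧ e.act j = .a2 p :=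
    e.wf (.a2 p) trivial ⟨i1, fun j hj => enabled_a2 e (hin j hj)⟩
  -- `st p q` is monotone after `i1`
  have hmono_step : ∀ (q : Fin n) x, i1 ≤ x →
      ((e.γ x).st p q : ℕ) ≤ ((e.γ (x+1)).st p q : ℕ) := by
    intro q x hx
    rcases st_succ e x p q with hc | ⟨_, hw, _⟩ | ⟨m, _, _, _, hlt, hnew⟩
    · rw [hc]
    · rw [hin x hx] at hw; exact absurd hw (by simp)
    · rw [hnew, fin5_val_succ _ hlt]; omega
  -- `st p q` stabilizes
  have hstab : ∀ q : Fin n, ∃ iq, i1 ≤ iq ∧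
      ∀ j, iq ≤ j → (e.γ j).st p q = (e.γ iq).st p q := by
    intro q
    obtain ⟨i', hi'⟩ := stab (fun j => ((e.γ (i1 + j)).st p q : ℕ)) 4
      (fun j k hjk => by
        refine mono_of_step (fun j => ((e.γ (i1 + j)).st p q : ℕ)) 0 ?_ j k (Nat.zero_le _) hjk
        intro x _
        show ((e.γ (i1 + x)).st p q : ℕ) ≤ ((e.γ (i1 + (x + 1))).st p q : ℕ)
        have := hmono_step q (i1 + x) (by omega)
        have hx : i1 + (x + 1) = (i1 + x) + 1 := by omega
        rw [hx]; exact this)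
      (fun j => by
        show ((e.γ (i1 + j)).st p q : ℕ) ≤ 4
        have := ((e.γ (i1 + j)).st p q).isLt; omega)
    refine ⟨i1 + i', by omega, ?_⟩
    intro j hj
    have hval := hi' (j - i1) (by omega)
    have hx : i1 + (j - i1) = j := by omega
    rw [hx] at hval
    exact Fin.val_inj.mp hval
  choose F hF1 hF2 using hstab
  set i2 := max i1 (Finset.univ.sup F) with hi2def
  have hFle : ∀ q : Fin n, F q ≤ i2 :=
    fun q => le_trans (Finset.le_sup (Finset.mem_univ q)) (le_max_right _ _)
  have hi2 : i1 ≤ i2 := le_max_left _ _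
  have hst2 : ∀ (q : Fin n) j, i2 ≤ j → (e.γ j).st p q = (e.γ i2).st p q := by
    intro q j hj
    rw [hF2 q j (le_trans (hFle q) hj), hF2 q i2 (hFle q)]
  by_cases hall : ∀ q, q ≠ p → (e.γ i2).st p q = 4
  · obtain ⟨j, hj, hact⟩ := wfa2 i2
    have hv := e.valid j; rw [hact] at hv; simp only [StepAt] at hv
    obtain ⟨hinj, hv | hv⟩ := hv
    · have : (e.γ (j+1)).req p = .Done := by rw [hv.2]; simp [Function.update]
      exact h (j+1) (by omega) this
    · exact hv.1 (fun q hq => by rw [hst2 q j hj]; exact hall q hq)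
  · push_neg at hall
    obtain ⟨q, hqp, hq4⟩ := hall
    set Lv := (e.γ i2).st p q with hLv
    have hLlt : (Lv : ℕ) < 4 := by
      have h5 := Lv.isLt
      by_contra hc
      apply hq4
      have hv4 : (Lv : ℕ) = 4 := by omega
      exact Fin.val_inj.mp (by rw [hv4]; rfl)
    have sendpq : ∀ k, ∃ j, k ≤ j ∧ SendAttempt e.γ e.act j p q := by
      intro k
      obtain ⟨j, hj, hact⟩ := wfa2 (max k i2)
      have hj2 : i2 ≤ j := le_trans (le_max_right _ _) hj
      refine ⟨j, le_trans (le_max_left _ _) hj,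
        Or.inl ⟨hact, hin j (by omega), hqp, ?_, ?_⟩⟩
      · rw [hst2 q j hj2]; exact hq4
      · intro hc; apply hq4; rw [hLv, ← hst2 q j hj2]; exact hc q hqp
    have recvq : ∀ k, ∃ j, k ≤ j ∧ ∃ m : Msg D, e.act j = .a3 q p m :=
      e.chanFair p q (Ne.symm hqp) sendpq
    obtain ⟨j1, hj1, m0, hm0⟩ := recvq i2
    have hcons1 : (e.γ (j1+1)).chan p q = none := by
      have hv := e.valid j1; rw [hm0] at hv; simp only [StepAt] at hv
      obtain ⟨_, _, _, _, _, _, _, hc, _⟩ := hv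
      exact hc
    have recv_sSt : ∀ j m, j1 + 1 ≤ j → e.act j = .a3 q p m → m.sSt = Lv := by
      intro j m hj hact
      have hv := e.valid j; rw [hact] at hv; simp only [StepAt] at hv
      have hch : (e.γ j).chan p q = some m := hv.2.1
      obtain ⟨u, hu1, hu2, _, hsSt, _⟩ :=
        origin e p q m (j1+1) j hj hch (by rw [hcons1]; simp)
      rw [hsSt]
      exact hst2 q (u+1) (by omega)
    obtain ⟨j2, hj2, m1, hm1⟩ := recvq (j1+1)
    have hng2 : ∀ j, j2 + 1 ≤ j → (e.γ j).ng q p = Lv := by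
      intro j hj
      induction j, hj using Nat.le_induction with
      | base =>
          have hv := e.valid j2; rw [hm1] at hv; simp only [StepAt] at hv
          obtain ⟨_, _, _, _, _, _, hng, _⟩ := hv
          rw [hng]
          have : (upd2 (e.γ j2).ng q p m1.sSt) q p = m1.sSt := by simp [upd2]
          rw [this]
          exact recv_sSt j2 m1 hj2 hm1
      | succ j hj ih =>
          rcases ng_succ e j q p with hc | ⟨m', hact, _, hng⟩
          · rw [hc, ih]
          · rw [hng]; exact recv_sSt j m' (by omega) hact
    have sendqp : ∀ k, ∃ j, k ≤ j ∧ SendAttempt e.γ e.act j q p := by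
      intro k
      obtain ⟨j, hj, m, hm⟩ := recvq (max k (j1+1))
      refine ⟨j, le_trans (le_max_left _ _) hj, Or.inr ⟨m, hm, ?_⟩⟩
      rw [recv_sSt j m (le_trans (le_max_right _ _) hj) hm]
      exact hLlt
    have recvp : ∀ k, ∃ j, k ≤ j ∧ ∃ m : Msg D, e.act j = .a3 p q m :=
      e.chanFair q p hqp sendqp
    obtain ⟨j3, hj3, m2, hm2⟩ := recvp (j2+1)
    have hcons3 : (e.γ (j3+1)).chan q p = none := by
      have hv := e.valid j3; rw [hm2] at hv; simp only [StepAt] at hv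
      obtain ⟨_, _, _, _, _, _, _, hc, _⟩ := hv
      exact hc
    obtain ⟨j4, hj4, m4, hm4⟩ := recvp (j3+1)
    have hv := e.valid j4; rw [hm4] at hv; simp only [StepAt] at hv
    obtain ⟨_, hch, _, _, _, hstnew, _⟩ := hv
    obtain ⟨u, hu1, hu2, _, _, hsNg⟩ :=
      origin e q p m4 (j3+1) j4 hj4 hch (by rw [hcons3]; simp)
    have hNg : m4.sNg = Lv := by
      rw [hsNg]
      exact hng2 (u+1) (by omega)
    have hstj4 : (e.γ j4).st p q = Lv := hst2 q j4 (by omega)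
    have hcond : (e.γ j4).st p q = m4.sNg ∧ ((e.γ j4).st p q : ℕ) < 4 := by
      rw [hstj4, hNg]; exact ⟨rfl, hLlt⟩
    have hnew : (e.γ (j4+1)).st p q = Lv + 1 := by
      rw [hstnew]
      have : (upd2 (e.γ j4).st p q
          (if (e.γ j4).st p q = m4.sNg ∧ ((e.γ j4).st p q : ℕ) < 4
            then (e.γ j4).st p q + 1 else (e.γ j4).st p q)) p q
          = (e.γ j4).st p q + 1 := by simp [upd2, if_pos hcond]
      rw [this, hstj4]
    have hold : (e.γ (j4+1)).st p q = Lv := hst2 q (j4+1) (by omega)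
    rw [hold] at hnew
    have := congrArg Fin.val hnew
    rw [fin5_val_succ _ hLlt] at this
    omega

end Liveness



section Window

variable {n : ℕ} {D : Type*} (e : Exec n D) (h1 : Hyp1 e)
  {p : Fin n} {s t : ℕ}

include h1 in
lemma window_in (hs : e.act s = .a1 p) (hst : s < t)
    (hbet : ∀ u, s < u → u < t → (e.γ u).req p ≠ .Done) :
    ∀ u, s < u → u < t → (e.γ u).req p = .In := by
  have hv := e.valid s
  rw [hs] at hv; simp only [StepAt] at hv
  have hbase : (e.γ (s+1)).req p = .In := by rw [hv.2]; simp [Function.update]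
  have main : ∀ u, s + 1 ≤ u → u < t → (e.γ u).req p = .In := by
    intro u hu
    induction u, hu using Nat.le_induction with
    | base => intro _; exact hbase
    | succ u hu ih =>
        intro hu2
        have hIn := ih (by omega)
        rcases req_succ e u p with hc | ⟨_, hw, _⟩ | ⟨_, _, hd, _⟩ | ⟨b, hb, _⟩
        · rw [hc, hIn]
        · rw [hIn] at hw; exact absurd hw (by simp)
        · exact absurd hd (hbet (u+1) (by omega) hu2)
        · have := h1 u p b hb; rw [hIn] at this; exact absurd this (by simp)
  exact fun u hu1 hu2 => main u (by omega) hu2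

include h1 in
lemma window_last (hs : e.act s = .a1 p) (hst : s < t)
    (hdone : (e.γ t).req p = .Done)
    (hbet : ∀ u, s < u → u < t → (e.γ u).req p ≠ .Done) :
    s + 2 ≤ t ∧ e.act (t-1) = .a2 p ∧
      ∀ q, q ≠ p → (e.γ (t-1)).st p q = 4 := by
  have hv := e.valid s
  rw [hs] at hv; simp only [StepAt] at hv
  have hbase : (e.γ (s+1)).req p = .In := by rw [hv.2]; simp [Function.update]
  have ht2 : s + 2 ≤ t := by
    by_contra hc
    have : t = s + 1 := by omega
    rw [this, hbase] at hdone
    exact absurd hdone (by simp)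
  have hpred : (e.γ (t-1)).req p = .In :=
    window_in e h1 hs hst hbet (t-1) (by omega) (by omega)
  have heq : t - 1 + 1 = t := by omega
  rcases req_succ e (t-1) p with hc | ⟨_, hw, _⟩ | ⟨ha, _, _, hall⟩ | ⟨b, _, hw⟩
  · rw [heq, hdone, hpred] at hc; exact absurd hc (by simp)
  · rw [hpred] at hw; exact absurd hw (by simp)
  · exact ⟨ht2, ha, hall⟩
  · rw [heq, hdone] at hw; exact absurd hw (by simp)

include h1 in
lemma window_bmes (hs : e.act s = .a1 p) (hst : s < t)
    (hbet : ∀ u, s < u → u < t → (e.γ u).req p ≠ .Done) :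
    ∀ u, s ≤ u → u ≤ t → (e.γ u).bmes p = (e.γ s).bmes p := by
  have hv := e.valid s
  rw [hs] at hv; simp only [StepAt] at hv
  have hwait : (e.γ s).req p = .Wait := hv.1
  intro u hu
  induction u, hu using Nat.le_induction with
  | base => intro _; rfl
  | succ u hu ih =>
      intro hu2
      rcases bmes_succ e u p with hc | ⟨b, hb⟩
      · rw [hc, ih (by omega)]
      · have hd := h1 u p b hb
        rcases Nat.eq_or_lt_of_le hu with hsu | hsu
        · rw [← hsu, hwait] at hd; exact absurd hd (by simp)
        · exact absurd hd (hbet u hsu (by omega))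

include h1 in
/-- The combinatorial heart of Correctness and Decision for a started,
terminating PIF-computation. -/
lemma window_main (hs : e.act s = .a1 p) (hst : s < t)
    (hdone : (e.γ t).req p = .Done)
    (hbet : ∀ u, s < u → u < t → (e.γ u).req p ≠ .Done)
    (q : Fin n) (hqp : q ≠ p) :
    (∃ k, s < k ∧ k < t ∧ brdEvent (e.γ k) (e.act k) q p ((e.γ s).bmes p)) ∧
    (∃ k, s < k ∧ k < t ∧ (∃ F, fckEvent (e.γ k) (e.act k) p q F) ∧
      (∀ u, s < u → u < t → (∃ F, fckEvent (e.γ u) (e.act u) p q F) → u = k) ∧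
      (∃ m' : Msg D, e.act k = .a3 p q m' ∧ m'.sNg = 3)) := by
  have hIn := window_in e h1 hs hst hbet
  obtain ⟨ht2, hlastact, hall4⟩ := window_last e h1 hs hst hdone hbet
  have hv0 := e.valid s
  rw [hs] at hv0; simp only [StepAt] at hv0
  -- the state function
  set f : ℕ → ℕ := fun u => ((e.γ u).st p q : ℕ) with hf
  have f0 : f (s+1) = 0 := by
    show ((e.γ (s+1)).st p q : ℕ) = 0
    rw [hv0.2]; simp [Function.update]
  have f4 : f (t-1) = 4 := by
    show ((e.γ (t-1)).st p q : ℕ) = 4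
    rw [hall4 q hqp]; rfl
  have hstep : ∀ x, s + 1 ≤ x → x < t →
      f (x+1) = f x ∨
      (f x < 4 ∧ f (x+1) = f x + 1 ∧
        ∃ m : Msg D, e.act x = .a3 p q m ∧ (e.γ x).chan q p = some m ∧
          (e.γ x).st p q = m.sNg) := by
    intro x hx1 hx2
    rcases st_succ e x p q with hc | ⟨_, hw, _⟩ | ⟨m, ha, hch, hsng, hlt, hnew⟩
    · left; show ((e.γ (x+1)).st p q : ℕ) = _; rw [hc]
    · rw [hIn x (by omega) hx2] at hw; exact absurd hw (by simp)
    · right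
      refine ⟨hlt, ?_, m, ha, hch, hsng⟩
      show ((e.γ (x+1)).st p q : ℕ) = _
      rw [hnew, fin5_val_succ _ hlt]
  have fmono : ∀ x y, s + 1 ≤ x → x ≤ y → y ≤ t → f x ≤ f y := by
    refine mono_of_step_window f (s+1) t ?_
    intro x hx1 hx2
    rcases hstep x hx1 hx2 with hc | ⟨_, hc, _⟩ <;> omega
  -- the four increments
  have inc : ∀ v : ℕ, v < 4 → ∃ k, s + 1 ≤ k ∧ k < t - 1 ∧
      f k = v ∧ f (k+1) = v + 1 ∧
      ∃ m : Msg D, e.act k = .a3 p q m ∧ (e.γ k).chan q p = some m ∧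
        (e.γ k).st p q = m.sNg := by
    intro v hv
    obtain ⟨k, hk1, hk2, hk3, hk4⟩ :=
      cross f v (s+1) (t-1) (by omega) (by omega) (by omega)
    rcases hstep k hk1 (by omega) with hc | ⟨_, hc, m, hm⟩
    · omega
    · exact ⟨k, hk1, hk2, by omega, by omega, m, hm⟩
  obtain ⟨k0, hk01, hk02, hk03, hk04, m0, hm0a, hm0c, hm0s⟩ := inc 0 (by omega)
  obtain ⟨k1, hk11, hk12, hk13, hk14, m1, hm1a, hm1c, hm1s⟩ := inc 1 (by omega)
  obtain ⟨k2, hk21, hk22, hk23, hk24, m2, hm2a, hm2c, hm2s⟩ := inc 2 (by omega)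
  obtain ⟨k3, hk31, hk32, hk33, hk34, m3, hm3a, hm3c, hm3s⟩ := inc 3 (by omega)
  -- ordering of the increments
  have h01 : k0 + 1 ≤ k1 := by
    by_contra hc
    have := fmono k1 k0 hk11 (by omega) (by omega); omega
  have h12 : k1 + 1 ≤ k2 := by
    by_contra hc
    have := fmono k2 k1 hk21 (by omega) (by omega); omega
  have h23 : k2 + 1 ≤ k3 := by
    by_contra hc
    have := fmono k3 k2 hk31 (by omega) (by omega); omega
  -- Fin-valued facts about the increment messages
  have hval3 : (e.γ k3).st p q = (3 : Fin 5) := by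
    apply Fin.val_inj.mp; exact hk33
  have hsng3 : m3.sNg = (3 : Fin 5) := by rw [← hm3s]; exact hval3
  -- the unique feedback event
  have hfck : fckEvent (e.γ k3) (e.act k3) p q m3.f :=
    ⟨m3, hm3a, rfl, hval3, hsng3⟩
  have huniq : ∀ u, s < u → u < t → (∃ F, fckEvent (e.γ u) (e.act u) p q F) →
      u = k3 := by
    rintro u hu1 hu2 ⟨F, m, hact, hmf, hst3, hmsng⟩
    have hv := e.valid u
    rw [hact] at hv; simp only [StepAt] at hv
    obtain ⟨_, _, _, _, _, hstnew, _⟩ := hv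
    have hcond : (e.γ u).st p q = m.sNg ∧ ((e.γ u).st p q : ℕ) < 4 := by
      rw [hst3, hmsng]; exact ⟨rfl, by omega⟩
    have hfu : f u = 3 := by show ((e.γ u).st p q : ℕ) = 3; rw [hst3]; rfl
    have hfu1 : f (u+1) = 4 := by
      show ((e.γ (u+1)).st p q : ℕ) = 4
      rw [hstnew]
      have : (upd2 (e.γ u).st p q
          (if (e.γ u).st p q = m.sNg ∧ ((e.γ u).st p q : ℕ) < 4
            then (e.γ u).st p q + 1 else (e.γ u).st p q)) p q
          = (e.γ u).st p q + 1 := by simp [upd2, if_pos hcond]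
      rw [this, fin5_val_succ _ hcond.2, hst3]; rfl
    by_contra hne
    rcases Nat.lt_or_ge u k3 with hlt | hge
    · have := fmono (u+1) k3 (by omega) (by omega) (by omega); omega
    · have hgt : k3 < u := by omega
      have := fmono (k3+1) u (by omega) (by omega) (by omega); omega
  refine ⟨?_, k3, by omega, by omega, ⟨m3.f, hfck⟩, huniq, m3, hm3a, hsng3⟩
  -- ===== the broadcast event =====
  -- consumption of the channel q → p at each increment
  have hcons : ∀ k (m : Msg D), e.act k = .a3 p q m →
      (e.γ (k+1)).chan q p = none := by
    intro k m hact
    have hv := e.valid k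
    rw [hact] at hv; simp only [StepAt] at hv
    obtain ⟨_, _, _, _, _, _, _, hc, _⟩ := hv
    exact hc
  -- origins of the increment messages
  obtain ⟨u1, hu11, hu12, _, _, hng1⟩ :=
    origin e q p m1 (k0+1) k1 h01 hm1c (by rw [hcons k0 m0 hm0a]; simp)
  obtain ⟨u2, hu21, hu22, _, _, hng2⟩ :=
    origin e q p m2 (k1+1) k2 h12 hm2c (by rw [hcons k1 m1 hm1a]; simp)
  obtain ⟨u3, hu31, hu32, _, _, hng3⟩ :=
    origin e q p m3 (k2+1) k3 h23 hm3c (by rw [hcons k2 m2 hm2a]; simp)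
  set g : ℕ → Fin 5 := fun x => (e.γ x).ng q p with hg
  have hga : g (u1+1) = m1.sNg := hng1.symm
  have hgb : g (u2+1) = m2.sNg := hng2.symm
  have hgc : g (u3+1) = m3.sNg := hng3.symm
  have hv1 : (m1.sNg : ℕ) = 1 := by rw [← hm1s]; exact hk13
  have hv2 : (m2.sNg : ℕ) = 2 := by rw [← hm2s]; exact hk23
  -- the change of `ng q p` from the value 1 to the value 2
  obtain ⟨r, hr1, hr2, hr3, hr4⟩ :=
    flip g m2.sNg (u1+1) (u2+1) (by omega)
      (by rw [hga]; intro hc; rw [hc] at hv1; omega)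
      hgb
  simp only [hg] at hr3 hr4
  have hrecv_r : ∃ mr : Msg D, e.act r = .a3 q p mr := by
    rcases ng_succ e r q p with hc | ⟨mr, hact, _, _⟩
    · rw [hc] at hr4; exact absurd hr4 hr3
    · exact ⟨mr, hact⟩
  obtain ⟨mr, hmr⟩ := hrecv_r
  have hcons_r : (e.γ (r+1)).chan p q = none := by
    have hv := e.valid r
    rw [hmr] at hv; simp only [StepAt] at hv
    obtain ⟨_, _, _, _, _, _, _, hc, _⟩ := hv
    exact hc
  -- the change of `ng q p` to the value 3
  obtain ⟨w, hw1, hw2, hw3, hw4⟩ :=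
    flip g (3 : Fin 5) (u2+1) (u3+1) (by omega)
      (by rw [hgb]; intro hc; rw [hc] at hv2; exact absurd hv2 (by decide))
      (by rw [hgc, hsng3])
  simp only [hg] at hw3 hw4
  have hrecv_w : ∃ mw : Msg D, e.act w = .a3 q p mw ∧
      (e.γ w).chan p q = some mw ∧ (e.γ (w+1)).ng q p = mw.sSt := by
    rcases ng_succ e w q p with hc | ⟨mw, hact, hch, hng⟩
    · rw [hc] at hw4; exact absurd hw4 hw3
    · exact ⟨mw, hact, hch, hng⟩
  obtain ⟨mw, hmwa, hmwc, hmwn⟩ := hrecv_w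
  have hmwsSt : mw.sSt = (3 : Fin 5) := by rw [← hmwn]; exact hw4
  -- origin of the message that made `ng q p` become 3: genuine, so it
  -- carries the broadcast message.
  obtain ⟨u', hu'1, hu'2, hb', _, _⟩ :=
    origin e p q mw (r+1) w (by omega) hmwc (by rw [hcons_r]; simp)
  have hbval : mw.b = (e.γ s).bmes p := by
    rw [hb']
    exact window_bmes e h1 hs hst hbet (u'+1) (by omega) (by omega)
  refine ⟨w, by omega, by omega, mw, hmwa, hbval, ?_, hmwsSt⟩
  exact hw3

end Window

/-- Protocol PIF is snap-stabilizing for the PIF-Execution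
specification: every execution, starting from any arbitrary initial
configuration (under the standing assumption, Hypothesis 1, that a requested
process is not re-requested before its current computation is done),
satisfies the **Start**, **Termination**, **Correctness** and **Decision**
properties of the PIF-Execution specification. -/
theorem pif_snap_stabilizing {n : ℕ} {D : Type*}
    (e : Exec n D) (h1 : Hyp1 e) :
    -- Start: when there is a request for `p` to broadcast, `p` starts a
    -- PIF-computation (executes A1) in finite time.
    (∀ p : Fin n, ∀ i, (e.γ i).req p = .Wait → ∃ j, i ≤ j ∧ e.act j = .a1 p) ∧
    -- Termination: any PIF-computation (even non-started) terminates.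
    (∀ p : Fin n, ∀ i, ∃ j, i ≤ j ∧ (e.γ j).req p = .Done) ∧
    -- Correctness: during any PIF-computation started by `p` for message
    -- `m = B-Mes p`, every other process receives `m` and `p` receives an
    -- acknowledgment for `m` from every other process.
    (∀ p : Fin n, ∀ s t, e.act s = .a1 p → s < t → (e.γ t).req p = .Done →
      (∀ u, s < u → u < t → (e.γ u).req p ≠ .Done) →
      ∀ q, q ≠ p →
        (∃ k, s < k ∧ k < t ∧
           brdEvent (e.γ k) (e.act k) q p ((e.γ s).bmes p)) ∧
        (∃ k, s < k ∧ k < t ∧ ∃ F, fckEvent (e.γ k) (e.act k) p q F)) ∧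
    -- Decision: when a PIF-computation started by `p` terminates at `p`,
    -- `p` decides taking into account only the acknowledgments of the last
    -- message it broadcast: exactly one feedback event per `q ≠ p`, each
    -- acknowledging the state-3 broadcast of `B-Mes p`.
    (∀ p : Fin n, ∀ s t, e.act s = .a1 p → s < t → (e.γ t).req p = .Done →
      (∀ u, s < u → u < t → (e.γ u).req p ≠ .Done) →
      ∀ q, q ≠ p → ∃ k, s < k ∧ k < t ∧
        (∃ F, fckEvent (e.γ k) (e.act k) p q F) ∧
        (∀ u, s < u → u < t →
           (∃ F, fckEvent (e.γ u) (e.act u) p q F) → u = k) ∧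
        (∃ m' : Msg D, e.act k = .a3 p q m' ∧ m'.sNg = 3)) := by
  refine ⟨fun p i hw => start_lemma e h1 p i hw,
          fun p i => termination e h1 p i, ?_, ?_⟩
  · intro p s t hs hst hdone hbet q hqp
    obtain ⟨hbrd, k, hk1, hk2, hfck, -, -⟩ :=
      window_main e h1 hs hst hdone hbet q hqp
    exact ⟨hbrd, k, hk1, hk2, hfck⟩
  · intro p s t hs hst hdone hbet q hqp
    exact (window_main e h1 hs hst hdone hbet q hqp).2

end PIF
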